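/- Let n ≥ 2 be an integer, let μ = j_{n/2−1,1} be the smallest positive zero of J_{n/2−1}, and define ψ(r) = r^{1−n/2} J_{n/2−1}(μ r) for r ∈ (0,1]. Then the function r ↦ |ψ'(r)| has a unique maximum point r* in the open interval (0,1): there exists a unique r* ∈ (0,1) such that |ψ'(r)| < |ψ'(r*)| for all r ∈ (0,1] with r ≠ r*. -/

import Mathlib

/-!
Write `J_ν(x) = (x/2)^ν F_ν(x²)` with the entire series `F_ν = besselSeries ν`; then
`ψ(r) = (μ/2)^ν F_ν(μ²r²)` and, since `F_ν' = -F_{ν+1}/4`, `|ψ'(r)|` is a positive multiple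
of `P(r) = r F_{ν+1}(T r²)`, `T = μ²`. Minimality of `μ` gives `F_ν > 0` on `[0, T)` and
`F_ν(T) = 0`; then `(t^{ν+1} F_{ν+1})' = t^ν F_ν` makes `F_{ν+1} > 0` on `(0, T]`.
Next `P'(r) = 4 W(T r²)` with `W = besselSlope ν = F_ν/2 - (2ν+1) F_{ν+1}/4`, and the
three-term recurrence gives `(t^{ν+1/2} W)' = t^{ν-1/2} F_{ν+1}(t) (2ν+1-t) / 8`. So
`t^{ν+1/2} W` vanishes at `0`, increases up to `2ν+1` and then decreases to a negative value
at `T`: `W` changes sign exactly once in `(0, T)`, and `P` increases, then decreases.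
-/

open MeasureTheory Set Filter

/-- Bessel function of the first kind of order `ν`, defined by its power series
(real exponents; intended for `x > 0`). -/
noncomputable def besselJ (ν x : ℝ) : ℝ :=
  ∑' k : ℕ, ((-1 : ℝ) ^ k / (Nat.factorial k * Real.Gamma (ν + k + 1))) *
    (x / 2) ^ (2 * (k : ℝ) + ν)

open Topology

lemma Gamma_le_Gamma_add_nat {s : ℝ} (hs : 1 ≤ s) (k : ℕ) :
    Real.Gamma s ≤ Real.Gamma (s + k) := by
  induction k with
  | zero => simp
  | succ k ih =>
    rw [Nat.cast_succ, ← add_assoc, Real.Gamma_add_one (by positivity)]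
    have : 0 < Real.Gamma (s + k) := Real.Gamma_pos_of_pos (by positivity)
    nlinarith

lemma strictMonoOn_rpow_mul {f f' : ℝ → ℝ} {p a b : ℝ} (hp : 0 ≤ p) (ha : 0 ≤ a)
    (hf : ContinuousOn f (Icc a b)) (hf' : ∀ t ∈ Ioo a b, HasDerivAt f (f' t) t)
    (hpos : ∀ t ∈ Ioo a b, 0 < p * f t + t * f' t) :
    StrictMonoOn (fun t => t ^ p * f t) (Icc a b) := by
  refine strictMonoOn_of_deriv_pos (convex_Icc a b)
    (((Real.continuous_rpow_const hp).continuousOn).mul hf) fun t ht => ?_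
  rw [interior_Icc] at ht
  have ht₀ : 0 < t := ha.trans_lt ht.1
  have hd : HasDerivAt (fun t => t ^ p * f t) _ t :=
    (Real.hasDerivAt_rpow_const (Or.inl ht₀.ne')).mul (hf' t ht)
  have := hpos t ht
  rw [hd.deriv, Real.rpow_sub_one ht₀.ne']
  calc 0 < t ^ p / t * (p * f t + t * f' t) := by positivity
    _ = _ := by field_simp

lemma strictAntiOn_rpow_mul {f f' : ℝ → ℝ} {p a b : ℝ} (hp : 0 ≤ p) (ha : 0 ≤ a)
    (hf : ContinuousOn f (Icc a b)) (hf' : ∀ t ∈ Ioo a b, HasDerivAt f (f' t) t)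
    (hneg : ∀ t ∈ Ioo a b, p * f t + t * f' t < 0) :
    StrictAntiOn (fun t => t ^ p * f t) (Icc a b) := by
  have h := strictMonoOn_rpow_mul (f := fun t => -f t) (f' := fun t => -f' t) hp ha hf.neg
    (fun t ht => (hf' t ht).neg) fun t ht => by linarith [hneg t ht]
  intro s hs t ht hst
  simpa only [mul_neg, neg_lt_neg_iff] using h hs ht hst

lemma exists_sign_change_of_strictMonoOn_of_strictAntiOn {g : ℝ → ℝ} {c T : ℝ} (hc : 0 < c)
    (hcT : c ≤ T) (hg : ContinuousOn g (Icc c T)) (hmono : StrictMonoOn g (Icc 0 c))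
    (hanti : StrictAntiOn g (Icc c T)) (hg₀ : g 0 = 0) (hgT : g T < 0) :
    ∃ t₀ ∈ Ioo c T, (∀ t ∈ Ioo 0 t₀, 0 < g t) ∧ ∀ t ∈ Ioc t₀ T, g t < 0 := by
  have hgc : 0 < g c := hg₀ ▸ hmono ⟨le_rfl, hc.le⟩ ⟨hc.le, le_rfl⟩ hc
  obtain ⟨t₀, ht₀, hgt₀⟩ := intermediate_value_Ioo' hcT hg ⟨hgT, hgc⟩
  refine ⟨t₀, ht₀, fun t ht => ?_, fun t ht => ?_⟩
  · rcases le_or_gt t c with htc | htc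
    · exact hg₀ ▸ hmono ⟨le_rfl, hc.le⟩ ⟨ht.1.le, htc⟩ ht.1
    · exact hgt₀ ▸ hanti ⟨htc.le, ht.2.trans ht₀.2 |>.le⟩ ⟨ht₀.1.le, ht₀.2.le⟩ ht.2
  · exact hgt₀ ▸ hanti ⟨ht₀.1.le, ht₀.2.le⟩ ⟨ht₀.1.le.trans ht.1.le, ht.2⟩ ht.1

lemma StrictMonoOn.lt_of_strictAntiOn {α β : Type*} [LinearOrder α] [Preorder β] {f : α → β}
    {a b c x : α} (hmono : StrictMonoOn f (Icc a c)) (hanti : StrictAntiOn f (Icc c b))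
    (hac : a ≤ c) (hcb : c ≤ b) (hx : x ∈ Icc a b) (hxc : x ≠ c) : f x < f c := by
  rcases hxc.lt_or_gt with h | h
  · exact hmono ⟨hx.1, h.le⟩ ⟨hac, le_rfl⟩ h
  · exact hanti ⟨le_rfl, hcb⟩ ⟨h.le, hx.2⟩ h

noncomputable def besselCoeff (ν : ℝ) (k : ℕ) : ℝ :=
  (-1) ^ k / (k.factorial * Real.Gamma (ν + k + 1) * 4 ^ k)

noncomputable def besselSeries (ν t : ℝ) : ℝ :=
  ∑' k, besselCoeff ν k * t ^ k

section BesselSeries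

variable {ν : ℝ}

lemma abs_besselCoeff_mul_pow_le (hν : 0 ≤ ν) {R : ℝ} (hR : 0 ≤ R) (k : ℕ) :
    |besselCoeff ν k| * R ^ k ≤ (Real.Gamma (ν + 1))⁻¹ * ((R / 4) ^ k / k.factorial) := by
  have hΓ : 0 < Real.Gamma (ν + 1) := Real.Gamma_pos_of_pos (by positivity)
  calc |besselCoeff ν k| * R ^ k = R ^ k / (k.factorial * Real.Gamma (ν + 1 + k) * 4 ^ k) := by
        rw [besselCoeff, abs_div, abs_pow, abs_neg, abs_one, one_pow, add_right_comm,
          abs_of_pos (by positivity)]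
        ring
    _ ≤ R ^ k / (k.factorial * Real.Gamma (ν + 1) * 4 ^ k) := by
        gcongr
        exact Gamma_le_Gamma_add_nat (by linarith) k
    _ = _ := by rw [div_pow]; ring

lemma summable_abs_besselCoeff_mul_pow (hν : 0 ≤ ν) {R : ℝ} (hR : 0 ≤ R) :
    Summable fun k => |besselCoeff ν k| * R ^ k :=
  .of_nonneg_of_le (fun _ => by positivity) (abs_besselCoeff_mul_pow_le hν hR)
    ((Real.summable_pow_div_factorial _).mul_left _)

lemma summable_besselCoeff_mul_pow (hν : 0 ≤ ν) (t : ℝ) :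
    Summable fun k => besselCoeff ν k * t ^ k :=
  .of_norm <| by
    simpa only [Real.norm_eq_abs, abs_mul, abs_pow] using
      summable_abs_besselCoeff_mul_pow hν (abs_nonneg t)

lemma succ_mul_besselCoeff_succ (ν : ℝ) (k : ℕ) :
    (k + 1) * besselCoeff ν (k + 1) = -besselCoeff (ν + 1) k / 4 := by
  have hk : ν + (k + 1 : ℕ) + 1 = ν + 1 + k + 1 := by push_cast; ring
  rw [besselCoeff, besselCoeff, hk, Nat.factorial_succ, pow_succ, pow_succ]
  push_cast
  field_simp

lemma besselCoeff_recurrence (hν : 0 ≤ ν) (k : ℕ) :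
    (ν + 1) * besselCoeff (ν + 1) (k + 1) - besselCoeff ν (k + 1) =
      besselCoeff (ν + 2) k / 4 := by
  have h₁ : ν + (k + 1 : ℕ) + 1 = ν + k + 2 := by push_cast; ring
  have h₂ : ν + 1 + (k + 1 : ℕ) + 1 = ν + k + 2 + 1 := by push_cast; ring
  have h₃ : ν + 2 + k + 1 = ν + k + 2 + 1 := by ring
  have hΓ : 0 < Real.Gamma (ν + k + 2) := Real.Gamma_pos_of_pos (by positivity)
  rw [besselCoeff, besselCoeff, besselCoeff, h₁, h₂, h₃, Real.Gamma_add_one (by positivity),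
    Nat.factorial_succ, pow_succ, pow_succ]
  push_cast
  field_simp
  ring

lemma hasSum_besselCoeff_mul_deriv_pow (hν : 0 ≤ ν) (t : ℝ) :
    HasSum (fun k => besselCoeff ν k * (k * t ^ (k - 1))) (-besselSeries (ν + 1) t / 4) := by
  refine (hasSum_nat_add_iff' 1).mp ?_
  have h := ((summable_besselCoeff_mul_pow (ν := ν + 1) (by linarith) t).hasSum.div_const 4).neg
  convert h using 1
  · ext k
    rw [Nat.add_sub_cancel, Nat.cast_succ, ← mul_assoc, mul_comm _ (k + 1 : ℝ),
      succ_mul_besselCoeff_succ]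
    ring
  · simp [besselSeries, neg_div]

lemma hasDerivAt_besselSeries (hν : 0 ≤ ν) (t : ℝ) :
    HasDerivAt (besselSeries ν) (-besselSeries (ν + 1) t / 4) t := by
  set R := |t| + 1
  have hR : 0 ≤ R := by positivity
  have hbound : Summable fun k => |besselCoeff ν k| * (k * R ^ (k - 1)) := by
    refine (summable_nat_add_iff 1).mp ?_
    refine ((summable_abs_besselCoeff_mul_pow (ν := ν + 1) (by linarith) hR).div_const 4).congr
      fun k => ?_
    have h := congrArg abs (succ_mul_besselCoeff_succ ν k)
    rw [abs_mul, abs_div, abs_neg, abs_of_pos (by positivity : (0 : ℝ) < k + 1),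
      abs_of_pos (by norm_num : (0 : ℝ) < 4)] at h
    rw [Nat.add_sub_cancel, Nat.cast_succ, mul_div_right_comm, ← h]
    ring
  have ht : t ∈ Metric.ball (0 : ℝ) R := by
    rw [Metric.mem_ball, dist_zero_right, Real.norm_eq_abs]
    linarith
  rw [← (hasSum_besselCoeff_mul_deriv_pow hν t).tsum_eq]
  refine hasDerivAt_tsum_of_isPreconnected hbound Metric.isOpen_ball
    (convex_ball 0 R).isPreconnected (fun k y _ => (hasDerivAt_pow k y).const_mul (besselCoeff ν k))
    (fun k y hy => ?_) ht (summable_besselCoeff_mul_pow hν t) ht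
  rw [Metric.mem_ball, dist_zero_right, Real.norm_eq_abs] at hy
  rw [Real.norm_eq_abs, abs_mul, abs_mul, abs_pow, Nat.abs_cast]
  gcongr

lemma continuous_besselSeries (hν : 0 ≤ ν) : Continuous (besselSeries ν) :=
  continuous_iff_continuousAt.2 fun t => (hasDerivAt_besselSeries hν t).continuousAt

lemma besselCoeff_zero (ν : ℝ) : besselCoeff ν 0 = (Real.Gamma (ν + 1))⁻¹ := by
  simp [besselCoeff]

lemma besselSeries_zero (ν : ℝ) : besselSeries ν 0 = (Real.Gamma (ν + 1))⁻¹ := by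
  rw [besselSeries, tsum_eq_single 0 fun k hk => by rw [zero_pow hk, mul_zero], pow_zero,
    mul_one, besselCoeff_zero]

lemma besselSeries_recurrence (hν : 0 ≤ ν) (t : ℝ) :
    (ν + 1) * besselSeries (ν + 1) t - besselSeries ν t = t / 4 * besselSeries (ν + 2) t := by
  have hΓ : 0 < Real.Gamma (ν + 1) := Real.Gamma_pos_of_pos (by positivity)
  have h0 : (ν + 1) * besselCoeff (ν + 1) 0 - besselCoeff ν 0 = 0 := by
    rw [besselCoeff_zero, besselCoeff_zero, Real.Gamma_add_one (by positivity)]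
    field_simp
    ring
  have hterm (k : ℕ) : (ν + 1) * (besselCoeff (ν + 1) (k + 1) * t ^ (k + 1)) -
      besselCoeff ν (k + 1) * t ^ (k + 1) = t / 4 * (besselCoeff (ν + 2) k * t ^ k) := by
    rw [← mul_assoc, ← sub_mul, besselCoeff_recurrence hν k, pow_succ]
    ring
  have h := ((summable_besselCoeff_mul_pow (ν := ν + 1) (by linarith) t).hasSum.mul_left
    (ν + 1)).sub (summable_besselCoeff_mul_pow hν t).hasSum
  refine h.unique ((hasSum_nat_add_iff' 1).mp ?_)
  simp only [hterm, Finset.range_one, Finset.sum_singleton, pow_zero, mul_one, h0, sub_zero]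
  exact (summable_besselCoeff_mul_pow (ν := ν + 2) (by linarith) t).hasSum.mul_left (t / 4)

end BesselSeries

lemma besselJ_eq_rpow_mul_besselSeries {ν x : ℝ} (hν : 0 ≤ ν) (hx : 0 < x) :
    besselJ ν x = (x / 2) ^ ν * besselSeries ν (x ^ 2) := by
  rw [besselJ, besselSeries, ← tsum_mul_left]
  refine tsum_congr fun k => ?_
  have hΓ : 0 < Real.Gamma (ν + k + 1) := Real.Gamma_pos_of_pos (by positivity)
  rw [Real.rpow_add (by positivity), Real.rpow_mul (by positivity), Real.rpow_two,
    Real.rpow_natCast, div_pow x, div_pow, show ((2 : ℝ) ^ 2) ^ k = 4 ^ k by norm_num, besselCoeff]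
  field_simp

noncomputable def besselSlope (ν t : ℝ) : ℝ :=
  besselSeries ν t / 2 - (2 * ν + 1) * besselSeries (ν + 1) t / 4

section BesselMax

variable {ν T : ℝ}

lemma besselSeries_succ_pos (hν : 0 ≤ ν) (hpos : ∀ t ∈ Ioo 0 T, 0 < besselSeries ν t) :
    ∀ t ∈ Ioc 0 T, 0 < besselSeries (ν + 1) t := by
  have hmono : StrictMonoOn (fun t => t ^ (ν + 1) * besselSeries (ν + 1) t) (Icc 0 T) := by
    refine strictMonoOn_rpow_mul (by linarith) le_rfl
      (continuous_besselSeries (by linarith)).continuousOn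
      (fun t _ => hasDerivAt_besselSeries (by linarith) t) fun t ht => ?_
    have := besselSeries_recurrence hν t
    rw [add_assoc, one_add_one_eq_two]
    linarith [hpos t ht]
  intro t ht
  have h : (0 : ℝ) ^ (ν + 1) * besselSeries (ν + 1) 0 < t ^ (ν + 1) * besselSeries (ν + 1) t :=
    hmono ⟨le_rfl, ht.1.le.trans ht.2⟩ ⟨ht.1.le, ht.2⟩ ht.1
  rw [Real.zero_rpow (by linarith), zero_mul] at h
  exact pos_of_mul_pos_right h (Real.rpow_nonneg ht.1.le _)

lemma hasDerivAt_besselSlope (hν : 0 ≤ ν) (t : ℝ) :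
    HasDerivAt (besselSlope ν)
      (-besselSeries (ν + 1) t / 8 + (2 * ν + 1) * besselSeries (ν + 2) t / 16) t := by
  have h : HasDerivAt (besselSlope ν) _ t := ((hasDerivAt_besselSeries hν t).div_const 2).sub
    (((hasDerivAt_besselSeries (ν := ν + 1) (by linarith) t).const_mul (2 * ν + 1)).div_const 4)
  rw [add_assoc, one_add_one_eq_two] at h
  exact h.congr_deriv (by ring)

lemma continuous_besselSlope (hν : 0 ≤ ν) : Continuous (besselSlope ν) :=
  continuous_iff_continuousAt.2 fun t => (hasDerivAt_besselSlope hν t).continuousAt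

lemma exists_besselSlope_sign_change (hν : 0 ≤ ν) (hT : 0 < T)
    (hpos : ∀ t ∈ Ioc 0 T, 0 < besselSeries (ν + 1) t) (hzero : besselSeries ν T = 0) :
    ∃ t₀ ∈ Ioo 0 T, (∀ t ∈ Ioo 0 t₀, 0 < besselSlope ν t) ∧
      ∀ t ∈ Ioc t₀ T, besselSlope ν t < 0 := by
  set c := 2 * ν + 1
  set p := ν + 1 / 2
  have hp : 0 ≤ p := by positivity
  have hweighted (t : ℝ) : p * besselSlope ν t +
      t * (-besselSeries (ν + 1) t / 8 + c * besselSeries (ν + 2) t / 16) =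
        besselSeries (ν + 1) t * (c - t) / 8 := by
    rw [besselSlope]
    linear_combination -c / 4 * besselSeries_recurrence hν t
  set m := fun t => t ^ p * besselSlope ν t
  have hmono (b : ℝ) (hbc : b ≤ c) (hbT : b ≤ T) : StrictMonoOn m (Icc 0 b) :=
    strictMonoOn_rpow_mul hp le_rfl (continuous_besselSlope hν).continuousOn
      (fun t _ => hasDerivAt_besselSlope hν t) fun t ht => by
        rw [hweighted]
        have := hpos t ⟨ht.1, ht.2.le.trans hbT⟩
        have : 0 < c - t := by linarith [ht.2]
        positivity
  have hm₀ : m 0 = 0 := by simp [m, Real.zero_rpow (by positivity : p ≠ 0)]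
  have hmT : m T < 0 := by
    have : besselSlope ν T < 0 := by
      rw [besselSlope, hzero]
      have := hpos T ⟨hT, le_rfl⟩
      have : 0 < c := by positivity
      nlinarith
    exact mul_neg_of_pos_of_neg (by positivity) this
  have hcT : c < T := by
    by_contra! h
    exact hmT.not_gt (hm₀ ▸ hmono T h le_rfl ⟨le_rfl, hT.le⟩ ⟨hT.le, le_rfl⟩ hT)
  have hanti : StrictAntiOn m (Icc c T) :=
    strictAntiOn_rpow_mul hp (by positivity) (continuous_besselSlope hν).continuousOn
      (fun t _ => hasDerivAt_besselSlope hν t) fun t ht => by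
        rw [hweighted]
        have := hpos t ⟨by linarith [ht.1, show 0 < c by positivity], ht.2.le⟩
        have : c - t < 0 := by linarith [ht.1]
        nlinarith
  obtain ⟨t₀, ht₀, hm_pos, hm_neg⟩ := exists_sign_change_of_strictMonoOn_of_strictAntiOn
    (by positivity) hcT.le
    ((Real.continuous_rpow_const hp).mul (continuous_besselSlope hν)).continuousOn
    (hmono c le_rfl hcT.le) hanti hm₀ hmT
  have ht₀pos : 0 < t₀ := by linarith [ht₀.1, show 0 < c by positivity]
  refine ⟨t₀, ⟨ht₀pos, ht₀.2⟩, fun t ht => ?_, fun t ht => ?_⟩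
  · exact pos_of_mul_pos_right (hm_pos t ht) (Real.rpow_nonneg ht.1.le _)
  · exact neg_of_mul_neg_right (hm_neg t ht) (Real.rpow_nonneg (ht₀pos.trans ht.1).le _)

lemma hasDerivAt_mul_besselSeries_succ (hν : 0 ≤ ν) (r : ℝ) :
    HasDerivAt (fun r => r * besselSeries (ν + 1) (T * r ^ 2))
      (4 * besselSlope ν (T * r ^ 2)) r := by
  have hsq : HasDerivAt (fun r => T * r ^ 2) (T * (2 * r)) r := by
    simpa using (hasDerivAt_pow 2 r).const_mul T
  have h : HasDerivAt (fun r => r * besselSeries (ν + 1) (T * r ^ 2)) _ r :=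
    (hasDerivAt_id' r).mul ((hasDerivAt_besselSeries (ν := ν + 1) (by linarith) _).comp r hsq)
  rw [add_assoc, one_add_one_eq_two] at h
  refine h.congr_deriv ?_
  rw [besselSlope]
  linear_combination 2 * besselSeries_recurrence hν (T * r ^ 2)

lemma exists_strictMax_mul_besselSeries_succ (hν : 0 ≤ ν) (hT : 0 < T)
    (hpos : ∀ t ∈ Ioc 0 T, 0 < besselSeries (ν + 1) t) (hzero : besselSeries ν T = 0) :
    ∃ r₀ ∈ Ioo 0 1, ∀ r ∈ Ioc 0 1, r ≠ r₀ →
      r * besselSeries (ν + 1) (T * r ^ 2) < r₀ * besselSeries (ν + 1) (T * r₀ ^ 2) := by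
  obtain ⟨t₀, ht₀, hslope_pos, hslope_neg⟩ := exists_besselSlope_sign_change hν hT hpos hzero
  set P := fun r => r * besselSeries (ν + 1) (T * r ^ 2)
  have hP (r : ℝ) : HasDerivAt P (4 * besselSlope ν (T * r ^ 2)) r :=
    hasDerivAt_mul_besselSeries_succ hν r
  have hPcont : ContinuousOn P univ :=
    continuous_iff_continuousAt.2 (fun r => (hP r).continuousAt) |>.continuousOn
  set r₀ := √(t₀ / T)
  have hlt_r₀ {r : ℝ} (hr : 0 ≤ r) : r < r₀ ↔ T * r ^ 2 < t₀ := by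
    rw [Real.lt_sqrt hr, lt_div_iff₀ hT, mul_comm]
  have hr₀_lt {r : ℝ} (hr : 0 < r) : r₀ < r ↔ t₀ < T * r ^ 2 := by
    rw [Real.sqrt_lt' hr, div_lt_iff₀ hT, mul_comm]
  have hr₀ : r₀ ∈ Ioo 0 1 :=
    ⟨Real.sqrt_pos.2 (div_pos ht₀.1 hT), by simpa using (hr₀_lt one_pos).2 (by simpa using ht₀.2)⟩
  have hmono : StrictMonoOn P (Icc 0 r₀) := by
    refine strictMonoOn_of_deriv_pos (convex_Icc 0 r₀) (hPcont.mono (subset_univ _))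
      fun r hr => ?_
    rw [interior_Icc] at hr
    rw [(hP r).deriv]
    exact mul_pos four_pos (hslope_pos _ ⟨mul_pos hT (pow_pos hr.1 2), (hlt_r₀ hr.1.le).1 hr.2⟩)
  have hanti : StrictAntiOn P (Icc r₀ 1) := by
    refine strictAntiOn_of_deriv_neg (convex_Icc r₀ 1) (hPcont.mono (subset_univ _))
      fun r hr => ?_
    rw [interior_Icc] at hr
    have hr0 : 0 < r := hr₀.1.trans hr.1
    rw [(hP r).deriv]
    refine mul_neg_of_pos_of_neg four_pos (hslope_neg _ ⟨(hr₀_lt hr0).1 hr.1, ?_⟩)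
    have : r ^ 2 ≤ 1 := pow_le_one₀ hr0.le hr.2.le
    nlinarith
  exact ⟨r₀, hr₀, fun r hr hne =>
    hmono.lt_of_strictAntiOn hanti hr₀.1.le hr₀.2.le ⟨hr.1.le, hr.2⟩ hne⟩

end BesselMax

section BesselZero

variable {ν μ : ℝ}

lemma besselSeries_pos_of_isLeast (hν : 0 ≤ ν)
    (hμ : IsLeast {x | 0 < x ∧ besselJ ν x = 0} μ) :
    ∀ t ∈ Ioo 0 (μ ^ 2), 0 < besselSeries ν t := by
  intro t ht
  by_contra! h
  have h₀ : 0 < besselSeries ν 0 := by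
    rw [besselSeries_zero]
    exact inv_pos.2 (Real.Gamma_pos_of_pos (by linarith))
  obtain ⟨z, hz, hFz⟩ := intermediate_value_Icc' ht.1.le
    (continuous_besselSeries hν).continuousOn ⟨h, h₀.le⟩
  have hz₀ : 0 < z := hz.1.lt_of_ne (by rintro rfl; linarith)
  have hμz : μ ≤ √z := hμ.2 ⟨Real.sqrt_pos.2 hz₀, by
    rw [besselJ_eq_rpow_mul_besselSeries hν (Real.sqrt_pos.2 hz₀), Real.sq_sqrt hz₀.le, hFz,
      mul_zero]⟩
  have hzμ : √z < μ := by
    rw [Real.sqrt_lt' hμ.1.1]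
    exact hz.2.trans_lt ht.2
  linarith

lemma besselSeries_sq_eq_zero (hν : 0 ≤ ν) (hμ : 0 < μ) (h : besselJ ν μ = 0) :
    besselSeries ν (μ ^ 2) = 0 := by
  rw [besselJ_eq_rpow_mul_besselSeries hν hμ] at h
  exact (mul_eq_zero.1 h).resolve_left (Real.rpow_pos_of_pos (by positivity) ν).ne'

lemma hasDerivAt_rpow_neg_mul_besselJ (hν : 0 ≤ ν) (hμ : 0 < μ) {r : ℝ} (hr : 0 < r) :
    HasDerivAt (fun r => r ^ (-ν) * besselJ ν (μ * r))
      (-((μ / 2) ^ ν * μ ^ 2 / 2) * (r * besselSeries (ν + 1) (μ ^ 2 * r ^ 2))) r := by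
  have heq : (fun r => (μ / 2) ^ ν * besselSeries ν (μ ^ 2 * r ^ 2)) =ᶠ[𝓝 r]
      fun r => r ^ (-ν) * besselJ ν (μ * r) := by
    filter_upwards [Ioi_mem_nhds hr] with s hs
    have : 0 < s ^ ν := Real.rpow_pos_of_pos hs ν
    rw [besselJ_eq_rpow_mul_besselSeries hν (mul_pos hμ hs), mul_div_right_comm,
      Real.mul_rpow (by positivity) hs.le, Real.rpow_neg hs.le, mul_pow]
    field_simp
  have hsq : HasDerivAt (fun r => μ ^ 2 * r ^ 2) (μ ^ 2 * (2 * r)) r := by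
    simpa using (hasDerivAt_pow 2 r).const_mul (μ ^ 2)
  have h : HasDerivAt (fun r => (μ / 2) ^ ν * besselSeries ν (μ ^ 2 * r ^ 2)) _ r :=
    ((hasDerivAt_besselSeries hν _).comp r hsq).const_mul ((μ / 2) ^ ν)
  exact (h.congr_deriv (by ring)).congr_of_eventuallyEq heq.symm

end BesselZero

/-- `|ψ'|`, where `ψ(r) = r^{1−n/2} J_{n/2−1}(μ r)`, has a unique
maximum point in `(0, 1)`. -/
theorem unique_max_of_abs_deriv_psi (n : ℕ) (hn : 2 ≤ n) (μ : ℝ)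
    (hμ : IsLeast {x : ℝ | 0 < x ∧ besselJ ((n : ℝ) / 2 - 1) x = 0} μ)
    (ψ : ℝ → ℝ)
    (hψ : ψ = fun r : ℝ => r ^ (1 - (n : ℝ) / 2) * besselJ ((n : ℝ) / 2 - 1) (μ * r)) :
    ∃! rstar : ℝ, rstar ∈ Set.Ioo (0 : ℝ) 1 ∧
      ∀ r ∈ Set.Ioc (0 : ℝ) 1, r ≠ rstar → |deriv ψ r| < |deriv ψ rstar| := by
  set ν := (n : ℝ) / 2 - 1 with hν_def
  have hν : 0 ≤ ν := by
    have : (2 : ℝ) ≤ n := by exact_mod_cast hn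
    linarith
  have hμ₀ : 0 < μ := hμ.1.1
  have hpos : ∀ t ∈ Ioc 0 (μ ^ 2), 0 < besselSeries (ν + 1) t :=
    besselSeries_succ_pos hν (besselSeries_pos_of_isLeast hν hμ)
  obtain ⟨r₀, hr₀, hmax⟩ := exists_strictMax_mul_besselSeries_succ hν (by positivity) hpos
    (besselSeries_sq_eq_zero hν hμ₀ hμ.1.2)
  set K := (μ / 2) ^ ν * μ ^ 2 / 2
  have hK : 0 < K := by
    have := Real.rpow_pos_of_pos (half_pos hμ₀) ν
    positivity
  have habs : ∀ r ∈ Ioc 0 1, |deriv ψ r| = K * (r * besselSeries (ν + 1) (μ ^ 2 * r ^ 2)) := by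
    intro r hr
    rw [hψ, show 1 - (n : ℝ) / 2 = -ν by ring, (hasDerivAt_rpow_neg_mul_besselJ hν hμ₀ hr.1).deriv,
      abs_mul, abs_neg, abs_of_pos hK, abs_of_pos]
    have : r ^ 2 ≤ 1 := pow_le_one₀ hr.1.le hr.2
    exact mul_pos hr.1 (hpos _ ⟨mul_pos (pow_pos hμ₀ 2) (pow_pos hr.1 2), by nlinarith⟩)
  have hstrict : ∀ r ∈ Ioc 0 1, r ≠ r₀ → |deriv ψ r| < |deriv ψ r₀| := fun r hr hne => by
    rw [habs r hr, habs r₀ ⟨hr₀.1, hr₀.2.le⟩]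
    exact mul_lt_mul_of_pos_left (hmax r hr hne) hK
  refine ⟨r₀, ⟨hr₀, hstrict⟩, fun y ⟨hy, hymax⟩ => ?_⟩
  by_contra hne
  exact (hstrict y ⟨hy.1, hy.2.le⟩ hne).not_gt (hymax r₀ ⟨hr₀.1, hr₀.2.le⟩ (Ne.symm hne))
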